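/- Let X be a bifurcating Markov chain on S with kernel P, induced kernel Q, started at x. Then for bounded measurable f and n ≥ 0, the second moment of M_{G_n}(f) = Σ_{i∈G_n} f(X_i) is E_x[M_{G_n}(f)²] = 2ⁿ Qⁿ(f²)(x) + Σ_{k=0}^{n-1} 2^{n+k} Q^{n-k-1}( P( Q^k f ⊗ Q^k f ) )(x). -/

import Mathlib

open MeasureTheory ProbabilityTheory ENNReal Filter

noncomputable section

/-- Nodes of the full binary tree: a node of generation `n` is a word
`Fin n → Bool`. -/
abbrev TreeNode : Type := Σ n : ℕ, (Fin n → Bool)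

/-- The root `∅` of the binary tree. -/
def rootNode : TreeNode := ⟨0, fun i => i.elim0⟩

/-- The child of the node `i` of generation `k` obtained by appending bit `b`. -/
def childNode {k : ℕ} (i : Fin k → Bool) (b : Bool) : TreeNode := ⟨k + 1, Fin.snoc i b⟩

/-- The action of the marginal mixture kernel `Q = (P₀ + P₁)/2` on real functions. -/
def QR {S : Type*} [MeasurableSpace S] (P : Kernel S (S × S)) (f : S → ℝ) (x : S) : ℝ :=
  (∫ yz, f yz.1 ∂(P x) + ∫ yz, f yz.2 ∂(P x)) / 2

/-- `n`-th iterate of `Q` acting on real functions. -/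
def QRiter {S : Type*} [MeasurableSpace S] (P : Kernel S (S × S)) (n : ℕ) (f : S → ℝ) : S → ℝ :=
  (QR P)^[n] f

/-- `X` is a bifurcating Markov chain on `S` with kernel `P`, on the probability
space `(Ω, m)`: every `X_i` is measurable and the branching Markov property
holds, expressed by integrating bounded measurable functionals of the tree up to
generation `k` against products over generation `k` of functions of
`(X_i, X_{i0}, X_{i1})`. -/
def IsBMC {S Ω : Type*} [MeasurableSpace S] [MeasurableSpace Ω] (m : Measure Ω)
    (P : Kernel S (S × S)) (X : TreeNode → Ω → S) : Prop :=
  (∀ p : TreeNode, Measurable (X p)) ∧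
  ∀ (k : ℕ) (g : (Fin k → Bool) → S → S → S → ℝ),
    (∀ i, Measurable fun p : S × S × S => g i p.1 p.2.1 p.2.2) →
    (∀ i, ∃ C, ∀ a b c, |g i a b c| ≤ C) →
    ∀ F : ({p : TreeNode // p.1 ≤ k} → S) → ℝ,
      Measurable F → (∃ C, ∀ v, |F v| ≤ C) →
      ∫ ω, (∏ i : Fin k → Bool,
          g i (X ⟨k, i⟩ ω) (X (childNode i false) ω) (X (childNode i true) ω))
          * F (fun p => X p.1 ω) ∂m
      = ∫ ω, (∏ i : Fin k → Bool,
          ∫ yz, g i (X ⟨k, i⟩ ω) yz.1 yz.2 ∂(P (X ⟨k, i⟩ ω)))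
          * F (fun p => X p.1 ω) ∂m

/-!
Write `M_n(g) = ∑_{i ∈ G_n} g(X_i)`. The sum over generation `n + 1` is
`∑_{i ∈ G_n} G(X_{i0}, X_{i1})` with `G(y, z) = f y + f z`, and the sibling pairs of distinct
parents are conditionally independent given generation `n`. This gives a law of total variance
`E[M_{n+1}(f)²] = E[∑_i (P(G²) - (PG)²)(X_i)] + E[(∑_i PG(X_i))²]`.
Here `PG = 2 Qf` and `P(G²) = 2 Q(f²) + 2 P(f ⊗ f)`, so the first term is given by the first
moment formula `E[M_n(g)] = 2ⁿ Qⁿ g(x)` and the second is `4 E[M_n(Qf)²]`; the second moment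
formula follows by induction on `n`, the induction hypothesis being applied to `Qf`.
-/

structure IsBoundedMeasurable {α : Type*} [MeasurableSpace α] (f : α → ℝ) : Prop where
  measurable : Measurable f
  bdd : ∃ C, ∀ y, |f y| ≤ C

namespace IsBoundedMeasurable

variable {α β : Type*} [MeasurableSpace α] [MeasurableSpace β] {f g : α → ℝ}

theorem const (c : ℝ) : IsBoundedMeasurable fun _ : α => c :=
  ⟨measurable_const, |c|, fun _ => le_rfl⟩

theorem add (hf : IsBoundedMeasurable f) (hg : IsBoundedMeasurable g) :
    IsBoundedMeasurable fun y => f y + g y := by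
  obtain ⟨C, hC⟩ := hf.bdd
  obtain ⟨D, hD⟩ := hg.bdd
  exact ⟨hf.measurable.add hg.measurable, C + D,
    fun y => (abs_add_le _ _).trans (add_le_add (hC y) (hD y))⟩

theorem sub (hf : IsBoundedMeasurable f) (hg : IsBoundedMeasurable g) :
    IsBoundedMeasurable fun y => f y - g y := by
  obtain ⟨C, hC⟩ := hf.bdd
  obtain ⟨D, hD⟩ := hg.bdd
  exact ⟨hf.measurable.sub hg.measurable, C + D,
    fun y => (abs_sub _ _).trans (add_le_add (hC y) (hD y))⟩

theorem mul (hf : IsBoundedMeasurable f) (hg : IsBoundedMeasurable g) :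
    IsBoundedMeasurable fun y => f y * g y := by
  obtain ⟨C, hC⟩ := hf.bdd
  obtain ⟨D, hD⟩ := hg.bdd
  refine ⟨hf.measurable.mul hg.measurable, C * D, fun y => ?_⟩
  rw [abs_mul]
  exact mul_le_mul (hC y) (hD y) (abs_nonneg _) ((abs_nonneg _).trans (hC y))

theorem pow_two (hf : IsBoundedMeasurable f) : IsBoundedMeasurable fun y => f y ^ 2 := by
  simpa only [sq] using hf.mul hf

theorem const_mul (hf : IsBoundedMeasurable f) (c : ℝ) : IsBoundedMeasurable fun y => c * f y :=
  (const c).mul hf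

theorem comp (hf : IsBoundedMeasurable f) {T : β → α} (hT : Measurable T) :
    IsBoundedMeasurable fun b => f (T b) :=
  ⟨hf.measurable.comp hT, hf.bdd.imp fun _ h y => h (T y)⟩

theorem integrable (hf : IsBoundedMeasurable f) (μ : Measure α) [IsFiniteMeasure μ] :
    Integrable f μ := by
  obtain ⟨C, hC⟩ := hf.bdd
  exact (integrable_const C).mono' hf.measurable.aestronglyMeasurable (ae_of_all _ hC)

theorem integral_kernel {G : β → ℝ} (hG : IsBoundedMeasurable G) (κ : Kernel α β)
    [IsMarkovKernel κ] : IsBoundedMeasurable fun y => ∫ z, G z ∂(κ y) := by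
  obtain ⟨C, hC⟩ := hG.bdd
  refine ⟨(hG.measurable.stronglyMeasurable.comp_measurable measurable_snd)
    |>.integral_kernel_prod_right'.measurable, C, fun y => ?_⟩
  simpa using norm_integral_le_of_norm_le_const (μ := κ y) (f := G) (ae_of_all _ hC)

theorem mulSingle {ι : Type*} [DecidableEq ι] {G : α → ℝ} (hG : IsBoundedMeasurable G)
    (i ℓ : ι) : IsBoundedMeasurable ((Pi.mulSingle i G : ι → α → ℝ) ℓ) := by
  rw [Pi.mulSingle_apply]
  split_ifs
  exacts [hG, const 1]

end IsBoundedMeasurable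

section MixtureKernel

variable {S : Type*} [MeasurableSpace S] (P : Kernel S (S × S)) {f g : S → ℝ}

theorem QR_const_mul (c : ℝ) (f : S → ℝ) :
    QR P (fun y => c * f y) = fun y => c * QR P f y := by
  funext y
  simp only [QR, integral_const_mul]
  ring

theorem QRiter_zero (f : S → ℝ) : QRiter P 0 f = f := rfl

theorem QRiter_succ (n : ℕ) (f : S → ℝ) : QRiter P (n + 1) f = QRiter P n (QR P f) :=
  Function.iterate_succ_apply _ _ _

theorem QRiter_const_mul (n : ℕ) (c : ℝ) (f : S → ℝ) :
    QRiter P n (fun y => c * f y) = fun y => c * QRiter P n f y := by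
  induction n generalizing f with
  | zero => rfl
  | succ n ih => simp only [QRiter_succ, QR_const_mul, ih]

variable [IsMarkovKernel P]

theorem integral_add_comp_eq_two_mul_QR (hf : IsBoundedMeasurable f) (y : S) :
    ∫ yz, (f yz.1 + f yz.2) ∂(P y) = 2 * QR P f y := by
  rw [integral_add ((hf.comp measurable_fst).integrable _) ((hf.comp measurable_snd).integrable _),
    QR]
  ring

theorem integral_add_comp_sq (hf : IsBoundedMeasurable f) (y : S) :
    ∫ yz, (f yz.1 + f yz.2) ^ 2 ∂(P y)
      = 2 * QR P (fun z => f z ^ 2) y + 2 * ∫ yz, f yz.1 * f yz.2 ∂(P y) := by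
  have hf₁ := hf.comp (measurable_fst (α := S) (β := S))
  have hf₂ := hf.comp (measurable_snd (α := S) (β := S))
  simp only [add_sq, mul_assoc]
  rw [integral_add ((hf₁.pow_two.add ((hf₁.mul hf₂).const_mul 2)).integrable _)
      (hf₂.pow_two.integrable _),
    integral_add (hf₁.pow_two.integrable _) (((hf₁.mul hf₂).const_mul 2).integrable _),
    integral_const_mul, QR]
  ring

theorem isBoundedMeasurable_QR (hf : IsBoundedMeasurable f) : IsBoundedMeasurable (QR P f) := by
  have h := (((hf.comp measurable_fst).add (hf.comp measurable_snd)).integral_kernel P).const_mul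
    (1 / 2)
  convert h using 2 with y
  rw [integral_add_comp_eq_two_mul_QR P hf]
  ring

theorem QR_add (hf : IsBoundedMeasurable f) (hg : IsBoundedMeasurable g) :
    QR P (fun y => f y + g y) = fun y => QR P f y + QR P g y := by
  funext y
  simp only [QR]
  rw [integral_add ((hf.comp measurable_fst).integrable _) ((hg.comp measurable_fst).integrable _),
    integral_add ((hf.comp measurable_snd).integrable _) ((hg.comp measurable_snd).integrable _)]
  ring

theorem QR_sub (hf : IsBoundedMeasurable f) (hg : IsBoundedMeasurable g) :
    QR P (fun y => f y - g y) = fun y => QR P f y - QR P g y := by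
  funext y
  simp only [QR]
  rw [integral_sub ((hf.comp measurable_fst).integrable _) ((hg.comp measurable_fst).integrable _),
    integral_sub ((hf.comp measurable_snd).integrable _) ((hg.comp measurable_snd).integrable _)]
  ring

theorem QRiter_add (n : ℕ) (hf : IsBoundedMeasurable f) (hg : IsBoundedMeasurable g) :
    QRiter P n (fun y => f y + g y) = fun y => QRiter P n f y + QRiter P n g y := by
  induction n generalizing f g with
  | zero => rfl
  | succ n ih =>
    simp only [QRiter_succ, QR_add P hf hg,
      ih (isBoundedMeasurable_QR P hf) (isBoundedMeasurable_QR P hg)]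

theorem QRiter_sub (n : ℕ) (hf : IsBoundedMeasurable f) (hg : IsBoundedMeasurable g) :
    QRiter P n (fun y => f y - g y) = fun y => QRiter P n f y - QRiter P n g y := by
  induction n generalizing f g with
  | zero => rfl
  | succ n ih =>
    simp only [QRiter_succ, QR_sub P hf hg,
      ih (isBoundedMeasurable_QR P hf) (isBoundedMeasurable_QR P hg)]

end MixtureKernel

theorem integral_sq_finset_sum {α ι : Type*} [MeasurableSpace α] {μ : Measure α}
    (s : Finset ι) {u : ι → α → ℝ}
    (hu : ∀ i ∈ s, ∀ j ∈ s, Integrable (fun x => u i x * u j x) μ) :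
    ∫ x, (∑ i ∈ s, u i x) ^ 2 ∂μ = ∑ i ∈ s, ∑ j ∈ s, ∫ x, u i x * u j x ∂μ := by
  simp only [sq, Finset.sum_mul_sum]
  rw [integral_finsetSum _ fun i hi => integrable_finsetSum _ fun j hj => hu i hi j hj]
  exact Finset.sum_congr rfl fun i hi => integral_finsetSum _ fun j hj => hu i hi j hj

theorem sum_generation_succ {M : Type*} [AddCommMonoid M] (n : ℕ) (u : TreeNode → M) :
    ∑ j : Fin (n + 1) → Bool, u ⟨n + 1, j⟩
      = ∑ i : Fin n → Bool, (u (childNode i false) + u (childNode i true)) := by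
  rw [← (Fin.snocEquiv fun _ => Bool).sum_comp, Fintype.sum_prod_type, Fintype.sum_bool,
    ← Finset.sum_add_distrib]
  exact Finset.sum_congr rfl fun i _ => add_comm _ _

theorem generation_zero_eq_rootNode (i : Fin 0 → Bool) : (⟨0, i⟩ : TreeNode) = rootNode :=
  congrArg (Sigma.mk 0) (funext fun j => j.elim0)

def childPair {S Ω : Type*} (X : TreeNode → Ω → S) {n : ℕ} (i : Fin n → Bool) (ω : Ω) :
    S × S :=
  (X (childNode i false) ω, X (childNode i true) ω)

namespace IsBMC

variable {S Ω : Type*} [MeasurableSpace S] [MeasurableSpace Ω] {m : Measure Ω}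
  {P : Kernel S (S × S)} {X : TreeNode → Ω → S} {n : ℕ}

theorem measurable_childPair (hX : IsBMC m P X) (i : Fin n → Bool) :
    Measurable (childPair X i) :=
  (hX.1 _).prodMk (hX.1 _)

theorem integral_prod_children (hX : IsBMC m P X) (g : (Fin n → Bool) → S × S → ℝ)
    (hg : ∀ i, IsBoundedMeasurable (g i)) :
    ∫ ω, ∏ i, g i (childPair X i ω) ∂m
      = ∫ ω, ∏ i, ∫ yz, g i yz ∂(P (X ⟨n, i⟩ ω)) ∂m := by
  simpa [childPair] using hX.2 n (fun i _ b c => g i (b, c))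
    (fun i => (hg i).measurable.comp measurable_snd)
    (fun i => (hg i).bdd.imp fun _ hC _ b c => hC (b, c)) (fun _ => 1) measurable_const
    ⟨1, fun _ => by norm_num⟩

variable [IsMarkovKernel P]

theorem integral_children (hX : IsBMC m P X) (i : Fin n → Bool) {G : S × S → ℝ}
    (hG : IsBoundedMeasurable G) :
    ∫ ω, G (childPair X i ω) ∂m = ∫ ω, ∫ yz, G yz ∂(P (X ⟨n, i⟩ ω)) ∂m := by
  have h := hX.integral_prod_children (Pi.mulSingle i G) (hG.mulSingle i)
  convert h using 3 with ω ω <;>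
    rw [Fintype.prod_eq_single i fun ℓ hℓ => by simp [hℓ]] <;> simp

theorem integral_mul_children_of_ne (hX : IsBMC m P X) {i j : Fin n → Bool} (hij : i ≠ j)
    {G H : S × S → ℝ} (hG : IsBoundedMeasurable G) (hH : IsBoundedMeasurable H) :
    ∫ ω, G (childPair X i ω) * H (childPair X j ω) ∂m
      = ∫ ω, (∫ yz, G yz ∂(P (X ⟨n, i⟩ ω))) * ∫ yz, H yz ∂(P (X ⟨n, j⟩ ω)) ∂m := by
  have h := hX.integral_prod_children
    (fun ℓ yz => (Pi.mulSingle i G : _ → S × S → ℝ) ℓ yz * (Pi.mulSingle j H : _ → _ → ℝ) ℓ yz)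
    fun ℓ => (hG.mulSingle i ℓ).mul (hH.mulSingle j ℓ)
  convert h using 3 with ω ω <;>
    rw [Finset.prod_eq_mul_of_mem i j (Finset.mem_univ _) (Finset.mem_univ _) hij
      fun ℓ _ hℓ => by simp [hℓ.1, hℓ.2]] <;> simp [hij, hij.symm]

section FiniteMeasure

variable [IsFiniteMeasure m]

theorem integral_sq_sum_children (hX : IsBMC m P X) (n : ℕ) {G : S × S → ℝ}
    (hG : IsBoundedMeasurable G) :
    ∫ ω, (∑ i : Fin n → Bool, G (childPair X i ω)) ^ 2 ∂m
      = ∫ ω, ∑ i : Fin n → Bool, (∫ yz, G yz ^ 2 ∂(P (X ⟨n, i⟩ ω))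
          - (∫ yz, G yz ∂(P (X ⟨n, i⟩ ω))) ^ 2) ∂m
        + ∫ ω, (∑ i : Fin n → Bool, ∫ yz, G yz ∂(P (X ⟨n, i⟩ ω))) ^ 2 ∂m := by
  set b : (Fin n → Bool) → Ω → ℝ := fun i ω => ∫ yz, G yz ∂(P (X ⟨n, i⟩ ω))
  set c : (Fin n → Bool) → Ω → ℝ := fun i ω => ∫ yz, G yz ^ 2 ∂(P (X ⟨n, i⟩ ω))
  have ha (i : Fin n → Bool) : IsBoundedMeasurable fun ω => G (childPair X i ω) :=
    hG.comp (hX.measurable_childPair i)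
  have hb (i : Fin n → Bool) : IsBoundedMeasurable (b i) := (hG.integral_kernel P).comp (hX.1 _)
  have hc (i : Fin n → Bool) : IsBoundedMeasurable (c i) :=
    (hG.pow_two.integral_kernel P).comp (hX.1 _)
  have pair (i j : Fin n → Bool) : ∫ ω, G (childPair X i ω) * G (childPair X j ω) ∂m
      = (if i = j then ∫ ω, (c i ω - b i ω ^ 2) ∂m else 0)
        + ∫ ω, b i ω * b j ω ∂m := by
    rcases eq_or_ne i j with rfl | hij
    · rw [if_pos rfl, ← integral_add (((hc i).sub (hb i).pow_two).integrable _)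
        (((hb i).mul (hb i)).integrable _)]
      simp only [← sq, sub_add_cancel]
      exact hX.integral_children i hG.pow_two
    · rw [if_neg hij, zero_add]
      exact hX.integral_mul_children_of_ne hij hG hG
  rw [integral_sq_finset_sum _ fun i _ j _ => ((ha i).mul (ha j)).integrable _,
    integral_sq_finset_sum _ fun i _ j _ => ((hb i).mul (hb j)).integrable _,
    integral_finsetSum _ fun i _ => ((hc i).sub (hb i).pow_two).integrable _]
  simp only [pair, Finset.sum_add_distrib, Finset.sum_ite_eq, Finset.mem_univ, if_true]

theorem integral_sum_children (hX : IsBMC m P X) (n : ℕ) {G : S × S → ℝ}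
    (hG : IsBoundedMeasurable G) :
    ∫ ω, ∑ i : Fin n → Bool, G (childPair X i ω) ∂m
      = ∫ ω, ∑ i : Fin n → Bool, ∫ yz, G yz ∂(P (X ⟨n, i⟩ ω)) ∂m := by
  rw [integral_finsetSum _ fun i _ => (hG.comp (hX.measurable_childPair i)).integrable _,
    integral_finsetSum _ fun i _ => ((hG.integral_kernel P).comp (hX.1 _)).integrable _]
  exact Finset.sum_congr rfl fun i _ => hX.integral_children i hG

end FiniteMeasure

variable [IsProbabilityMeasure m]

theorem integral_sum_generation (hX : IsBMC m P X) {x : S} (hroot : ∀ ω, X rootNode ω = x)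
    (n : ℕ) {g : S → ℝ} (hg : IsBoundedMeasurable g) :
    ∫ ω, ∑ i : Fin n → Bool, g (X ⟨n, i⟩ ω) ∂m = 2 ^ n * QRiter P n g x := by
  induction n generalizing g with
  | zero => simp [generation_zero_eq_rootNode, hroot, QRiter_zero]
  | succ n ih =>
    have hG := (hg.comp (measurable_fst (α := S) (β := S))).add (hg.comp measurable_snd)
    calc ∫ ω, ∑ j : Fin (n + 1) → Bool, g (X ⟨n + 1, j⟩ ω) ∂m
        = ∫ ω, ∑ i : Fin n → Bool,
            (g (childPair X i ω).1 + g (childPair X i ω).2) ∂m := by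
          congr 1 with ω
          exact sum_generation_succ n fun p => g (X p ω)
      _ = ∫ ω, ∑ i : Fin n → Bool, 2 * QR P g (X ⟨n, i⟩ ω) ∂m := by
          rw [hX.integral_sum_children n hG]
          simp only [integral_add_comp_eq_two_mul_QR P hg]
      _ = 2 ^ (n + 1) * QRiter P (n + 1) g x := by
          simp_rw [← Finset.mul_sum]
          rw [integral_const_mul, ih (isBoundedMeasurable_QR P hg), QRiter_succ]
          ring

theorem integral_sq_sum_generation_succ (hX : IsBMC m P X) {x : S}
    (hroot : ∀ ω, X rootNode ω = x) (n : ℕ) {f : S → ℝ} (hf : IsBoundedMeasurable f) :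
    ∫ ω, (∑ j : Fin (n + 1) → Bool, f (X ⟨n + 1, j⟩ ω)) ^ 2 ∂m
      = 2 ^ (n + 1) * QRiter P (n + 1) (fun y => f y ^ 2) x
        + 2 ^ (n + 1) * QRiter P n (fun y => ∫ yz, f yz.1 * f yz.2 ∂(P y)) x
        - 4 * (2 ^ n * QRiter P n (fun y => QR P f y ^ 2) x)
        + 4 * ∫ ω, (∑ i : Fin n → Bool, QR P f (X ⟨n, i⟩ ω)) ^ 2 ∂m := by
  have hf₁ := hf.comp (measurable_fst (α := S) (β := S))
  have hf₂ := hf.comp (measurable_snd (α := S) (β := S))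
  have hPff := (hf₁.mul hf₂).integral_kernel P
  have hQf := isBoundedMeasurable_QR P hf
  have hQf2 := isBoundedMeasurable_QR P hf.pow_two
  have hsplit ω : ∑ j : Fin (n + 1) → Bool, f (X ⟨n + 1, j⟩ ω)
      = ∑ i : Fin n → Bool, (f (childPair X i ω).1 + f (childPair X i ω).2) :=
    sum_generation_succ n fun p => f (X p ω)
  have hsq ω : (∑ i : Fin n → Bool, 2 * QR P f (X ⟨n, i⟩ ω)) ^ 2
      = 4 * (∑ i : Fin n → Bool, QR P f (X ⟨n, i⟩ ω)) ^ 2 := by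
    rw [← Finset.mul_sum]; ring
  simp only [hsplit]
  rw [hX.integral_sq_sum_children n (hf₁.add hf₂)]
  simp only [integral_add_comp_sq P hf, integral_add_comp_eq_two_mul_QR P hf, mul_pow, hsq,
    integral_const_mul]
  have hA := (hQf2.const_mul 2).add (hPff.const_mul 2)
  have hB := hQf.pow_two.const_mul (2 ^ 2)
  rw [hX.integral_sum_generation hroot n (hA.sub hB), QRiter_sub P n hA hB,
    QRiter_add P n (hQf2.const_mul 2) (hPff.const_mul 2)]
  simp only [QRiter_const_mul, QRiter_succ]
  ring

end IsBMC

/-- Second moment formula for a BMC started at `x`: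
`E_x[M_{G_n}(f)²] = 2ⁿ Qⁿ(f²)(x) + ∑_{k<n} 2^{n+k} Q^{n-k-1}(P(Q^k f ⊗ Q^k f))(x)`. -/
theorem stmt6 {S Ω : Type*} [MeasurableSpace S] [MeasurableSpace Ω]
    (m : Measure Ω) [IsProbabilityMeasure m]
    (P : Kernel S (S × S)) [IsMarkovKernel P]
    (X : TreeNode → Ω → S) (hX : IsBMC m P X)
    (x : S) (hroot : ∀ ω, X rootNode ω = x)
    (f : S → ℝ) (hfm : Measurable f) (hfb : ∃ C, ∀ y, |f y| ≤ C) (n : ℕ) :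
    ∫ ω, (∑ i : Fin n → Bool, f (X ⟨n, i⟩ ω)) ^ 2 ∂m
      = 2 ^ n * QRiter P n (fun y => f y ^ 2) x
        + ∑ k ∈ Finset.range n, 2 ^ (n + k) *
            QRiter P (n - k - 1)
              (fun y => ∫ yz, QRiter P k f yz.1 * QRiter P k f yz.2 ∂(P y)) x := by
  induction n generalizing f with
  | zero => simp [generation_zero_eq_rootNode, hroot, QRiter_zero]
  | succ n ih =>
    have hQf := isBoundedMeasurable_QR P ⟨hfm, hfb⟩
    have hpow (k : ℕ) : (2 : ℝ) ^ (n + 1 + (k + 1)) = 4 * 2 ^ (n + k) := by ring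
    rw [hX.integral_sq_sum_generation_succ hroot n ⟨hfm, hfb⟩, ih _ hQf.measurable hQf.bdd,
      Finset.sum_range_succ']
    simp only [← QRiter_succ, QRiter_zero, Nat.add_sub_cancel, Nat.sub_zero,
      Nat.add_sub_add_right, hpow, mul_assoc, ← Finset.mul_sum]
    ring
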